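/- Let N be an exact category, let bBN ⊇ qBN be the subcategory of weak equivalences of BN consisting of maps f such that ⊥f is a quasi-isomorphism, and let B^bN be the corresponding subcategory of b-acyclic binary complexes, with quasi-isomorphisms as weak equivalences. Then the map KqB^bN → K[qBN →⊥ qCN] induced by the identity on KqBN (via the comparison of the Waldhausen fibration sequence KqB^bN → KqBN → KbBN with the homotopy fiber sequence of ⊥ : KqBN → KqCN, using that ⊥ : KbBN → KqCN is a homotopy equivalence) is a homotopy equivalence. -/

import Mathlib

open ContinuousMap

noncomputable section

/-- The homotopy fiber of a continuous map `f : X → Y` over a base point `y₀ : Y`: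
the space of pairs `(x, α)` where `α : [0,1] → Y` is a path with `α 0 = y₀` and `α 1 = f x`. -/
def HoFib {X Y : Type} [TopologicalSpace X] [TopologicalSpace Y]
    (f : C(X, Y)) (y₀ : Y) : Type :=
  { p : X × C(unitInterval, Y) // p.2 0 = y₀ ∧ p.2 1 = f p.1 }

instance HoFib.topologicalSpace {X Y : Type} [TopologicalSpace X] [TopologicalSpace Y]
    (f : C(X, Y)) (y₀ : Y) : TopologicalSpace (HoFib f y₀) :=
  inferInstanceAs (TopologicalSpace { p : X × C(unitInterval, Y) // p.2 0 = y₀ ∧ p.2 1 = f p.1 })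

/-- A continuous map is a homotopy equivalence. -/
def IsHomotopyEquiv {X Y : Type} [TopologicalSpace X] [TopologicalSpace Y] (f : C(X, Y)) : Prop :=
  ∃ g : C(Y, X), (g.comp f).Homotopic (ContinuousMap.id X) ∧
    (f.comp g).Homotopic (ContinuousMap.id Y)

/-- The map between homotopy fibers induced by a strictly commuting square. -/
def HoFib.map {X Y X' Y' : Type} [TopologicalSpace X] [TopologicalSpace Y]
    [TopologicalSpace X'] [TopologicalSpace Y']
    {f : C(X, Y)} {f' : C(X', Y')} {y₀ : Y} {y₀' : Y'}
    (g : C(X, X')) (h : C(Y, Y'))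
    (hcomm : ∀ x, h (f x) = f' (g x)) (hbase : h y₀ = y₀') :
    C(HoFib f y₀, HoFib f' y₀') where
  toFun p := ⟨(g p.1.1, h.comp p.1.2), by
    refine ⟨?_, ?_⟩
    · show h (p.1.2 0) = y₀'
      rw [p.2.1, hbase]
    · show h (p.1.2 1) = f' (g p.1.1)
      rw [p.2.2, hcomm]⟩
  continuous_toFun := by
    refine Continuous.subtype_mk ?_ _
    refine Continuous.prodMk ?_ ?_
    · exact g.continuous.comp (continuous_fst.comp continuous_subtype_val)
    · exact (ContinuousMap.continuous_postcomp h).comp (continuous_snd.comp continuous_subtype_val)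

/-- The canonical map from `A` to the homotopy fiber of `g : B → C`, for a composable pair
`f : A → B`, `g : B → C` whose composite is constant at `c₀` (using the constant path). -/
def toHoFib {A B C' : Type} [TopologicalSpace A] [TopologicalSpace B] [TopologicalSpace C']
    (f : C(A, B)) (g : C(B, C')) (c₀ : C') (hnull : ∀ a, g (f a) = c₀) :
    C(A, HoFib g c₀) where
  toFun a := ⟨(f a, ContinuousMap.const _ c₀), ⟨rfl, (hnull a).symm⟩⟩
  continuous_toFun := by
    refine Continuous.subtype_mk ?_ _
    exact f.continuous.prodMk continuous_const

/-- `A → B → C` is a homotopy fiber sequence: the canonical map from `A` to the homotopy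
fiber of `B → C` is a homotopy equivalence. -/
def IsHoFiberSeq {A B C' : Type} [TopologicalSpace A] [TopologicalSpace B] [TopologicalSpace C']
    (f : C(A, B)) (g : C(B, C')) (c₀ : C') (hnull : ∀ a, g (f a) = c₀) : Prop :=
  IsHomotopyEquiv (toHoFib f g c₀ hnull)

/-- The class of a point in `π₀`. -/
def Pi0.mk {X : Type} [TopologicalSpace X] (x : X) : ZerothHomotopy X :=
  Quotient.mk (pathSetoid X) x

/-- The map on `π₀` induced by a continuous map. -/
def Pi0Map {X Y : Type} [TopologicalSpace X] [TopologicalSpace Y] (f : C(X, Y)) :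
    ZerothHomotopy X → ZerothHomotopy Y :=
  Quotient.map f (fun _ _ h => Nonempty.map (fun p => p.map f.continuous) h)

end

/-! The comparison map is the composite of Waldhausen's equivalence `KqB^b𝒩 → HoFib p kb₀` with
the map `HoFib p kb₀ → HoFib (botB ∘ p) (botB kb₀)` induced by postcomposition with `botB`, so it
suffices that postcomposition with a homotopy equivalence is an equivalence on homotopy fibres.

A homotopy `H : h₀ ≃ h₁` induces a map from the homotopy fibre of `h₀ ∘ f` to that of `h₁ ∘ f`,
conjugating a path by the tracks of `H` at its endpoints. Conjugating back along the reversed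
homotopy is a homotopy inverse, and conjugation turns postcomposition with `h₀` into
postcomposition with `h₁` up to homotopy. Hence postcomposition with a map homotopic to the
identity is an equivalence, and two-out-of-six applied to `g ∘ h ≃ id` and `h ∘ g ≃ id` treats
an arbitrary homotopy equivalence `h`.

Each homotopy of paths needed here is produced in the same way: both paths are images, under
one continuous family of maps, of two paths with common endpoints in a simply connected
parameter space (a square, or the real line), where any two such paths are homotopic. -/

open unitInterval

instance unitInterval.contractibleSpace : ContractibleSpace I :=
  (convex_Icc (0 : ℝ) 1).contractibleSpace (Set.nonempty_Icc.2 zero_le_one)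

namespace IsHomotopyEquiv

variable {W₁ W₂ W₃ W₄ : Type} [TopologicalSpace W₁] [TopologicalSpace W₂]
  [TopologicalSpace W₃] [TopologicalSpace W₄]

theorem comp {φ : C(W₁, W₂)} {ψ : C(W₂, W₃)} (hφ : IsHomotopyEquiv φ)
    (hψ : IsHomotopyEquiv ψ) : IsHomotopyEquiv (ψ.comp φ) := by
  obtain ⟨φ', hφ₁, hφ₂⟩ := hφ
  obtain ⟨ψ', hψ₁, hψ₂⟩ := hψ
  exact ⟨φ'.comp ψ', ((Homotopic.refl φ').comp (hψ₁.comp (Homotopic.refl φ))).trans hφ₁,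
    ((Homotopic.refl ψ).comp (hφ₂.comp (Homotopic.refl ψ'))).trans hψ₂⟩

theorem of_homotopic {φ ψ : C(W₁, W₂)} (hφ : IsHomotopyEquiv φ) (h : φ.Homotopic ψ) :
    IsHomotopyEquiv ψ := by
  obtain ⟨φ', hφ₁, hφ₂⟩ := hφ
  exact ⟨φ', ((Homotopic.refl φ').comp h.symm).trans hφ₁,
    (h.symm.comp (Homotopic.refl φ')).trans hφ₂⟩

theorem of_comp_of_comp {A : C(W₁, W₂)} {B : C(W₂, W₃)} {C : C(W₃, W₄)}
    (hBA : IsHomotopyEquiv (B.comp A)) (hCB : IsHomotopyEquiv (C.comp B)) :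
    IsHomotopyEquiv A := by
  obtain ⟨u, hu₁, hu₂⟩ := hBA
  obtain ⟨v, hv₁, -⟩ := hCB
  refine ⟨u.comp B, hu₁, ?_⟩
  -- `A u B ≃ (v C B) A u B = v C (B A u) B ≃ v C B ≃ id`
  exact (hv₁.symm.comp (Homotopic.refl (A.comp (u.comp B)))).trans
    (((Homotopic.refl (v.comp C)).comp (hu₂.comp (Homotopic.refl B))).trans hv₁)

end IsHomotopyEquiv

namespace HoFib

variable {X Y Z : Type} [TopologicalSpace X] [TopologicalSpace Y] [TopologicalSpace Z]
  {f : C(X, Y)} {y₀ : Y}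

def path (z : HoFib f y₀) : Path y₀ (f z.1.1) := ⟨z.1.2, z.2.1, z.2.2⟩

lemma continuous_path : Continuous ↿(fun z : HoFib f y₀ => z.path) :=
  continuous_eval.comp ((continuous_snd.comp continuous_subtype_val).prodMap continuous_id)

def lift (x : C(Z, X)) (γ : ∀ z, Path y₀ (f (x z))) (hγ : Continuous ↿γ) :
    C(Z, HoFib f y₀) where
  toFun z := ⟨(x z, (γ z).toContinuousMap), (γ z).source, (γ z).target⟩
  continuous_toFun :=
    (x.continuous.prodMk (ContinuousMap.continuous_of_continuous_uncurry _ hγ)).subtype_mk _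

theorem homotopic_of_paths_factor {K : Type} [TopologicalSpace K] [SimplyConnectedSpace K]
    {k₀ k₁ : K} (p q : Path k₀ k₁) (Φ : C(Z × K, Y)) {φ ψ : C(Z, HoFib f y₀)}
    (hx : ∀ z, (ψ z).1.1 = (φ z).1.1)
    (hφ : ∀ z t, (φ z).1.2 t = Φ (z, p t)) (hψ : ∀ z t, (ψ z).1.2 t = Φ (z, q t)) :
    φ.Homotopic ψ := by
  obtain ⟨F⟩ := SimplyConnectedSpace.paths_homotopic p q
  let γ (w : I × Z) : Path y₀ (f (φ w.2).1.1) :=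
    ((F.eval w.1).map (Φ.curry w.2).continuous).cast
      (by simpa using ((hφ w.2 0).symm.trans (φ w.2).2.1).symm)
      (by simpa using ((hφ w.2 1).symm.trans (φ w.2).2.2).symm)
  refine ⟨⟨lift ⟨fun w => (φ w.2).1.1, by fun_prop⟩ γ
    (show Continuous fun w : (I × Z) × I => Φ (w.1.2, F (w.1.1, w.2)) by fun_prop),
    fun z => ?_, fun z => ?_⟩⟩
  · refine Subtype.ext (Prod.ext rfl (ContinuousMap.ext fun t => ?_))
    exact (congrArg (fun k => Φ (z, k)) (F.apply_zero t)).trans (hφ z t).symm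
  · refine Subtype.ext (Prod.ext (hx z).symm (ContinuousMap.ext fun t => ?_))
    exact (congrArg (fun k => Φ (z, k)) (F.apply_one t)).trans (hψ z t).symm

variable {Y' : Type} [TopologicalSpace Y'] {h₀ h₁ : C(Y, Y')}

def postcomp (h : C(Y, Y')) : C(HoFib f y₀, HoFib (h.comp f) (h y₀)) :=
  HoFib.map (ContinuousMap.id X) h (fun _ => rfl) rfl

noncomputable def conj (H : h₀.Homotopy h₁) :
    C(HoFib (h₀.comp f) (h₀ y₀), HoFib (h₁.comp f) (h₁ y₀)) :=
  lift ⟨fun z => z.1.1, by fun_prop⟩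
    (fun z => ((H.evalAt y₀).symm.trans z.path).trans (H.evalAt (f z.1.1)))
    (Path.trans_continuous_family _
      (Path.trans_continuous_family _ (by fun_prop) _ continuous_path) _
      (show Continuous fun w : HoFib (h₀.comp f) (h₀ y₀) × I => H (w.2, f w.1.1.1) by
        fun_prop))

lemma conj_snd (H : h₀.Homotopy h₁) (z : HoFib (h₀.comp f) (h₀ y₀)) (t : I) :
    (conj H z).1.2 t = (((H.evalAt y₀).symm.trans z.path).trans (H.evalAt (f z.1.1))) t :=
  rfl

theorem conj_comp_postcomp_homotopic (H : h₀.Homotopy h₁) :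
    ((conj H).comp (postcomp h₀ : C(HoFib f y₀, _))).Homotopic (postcomp h₁) := by
  -- On the square `(s, t) ↦ H (s, α t)`, the conjugate of `h₀ ∘ α` runs along three sides and
  -- `h₁ ∘ α` along the fourth.
  let Φ : C(HoFib f y₀ × (I × I), Y') := ⟨fun w => H (w.2.1, w.1.1.2 w.2.2), by fun_prop⟩
  refine homotopic_of_paths_factor
    (((Path.id.symm.prod (Path.refl 0)).trans ((Path.refl 0).prod Path.id)).trans
      (Path.id.prod (Path.refl 1)))
    ((Path.refl 1).prod Path.id) Φ (fun _ => rfl) (fun z t => ?_) (fun z t => ?_)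
  · simp only [ContinuousMap.comp_apply, conj_snd, Φ, Path.trans_apply]
    split_ifs
    · exact congrArg (fun y => H (_, y)) z.2.1.symm
    · exact (H.apply_zero _).symm
    · exact congrArg (fun y => H (_, y)) z.2.2.symm
  · exact (H.apply_one _).symm

theorem conj_symm_comp_conj_homotopic (H : h₀.Homotopy h₁) :
    ((conj H.symm).comp (conj H : C(HoFib (h₀.comp f) (h₀ y₀), _))).Homotopic
      (ContinuousMap.id _) := by
  -- Both paths are reparametrisations of the conjugated path `γ z`, which follows the tracks
  -- of `H` on `[0, 1/4]` and `[1/2, 1]` and the original path on `[1/4, 1/2]`.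
  let γ (z : HoFib (h₀.comp f) (h₀ y₀)) :=
    ((H.evalAt y₀).symm.trans z.path).trans (H.evalAt (f z.1.1))
  let Φ : C(HoFib (h₀.comp f) (h₀ y₀) × ℝ, Y') :=
    ⟨fun w => (γ w.1).extend w.2, Path.continuous_uncurry_extend_of_continuous_family γ
        (continuous_path.comp ((conj H).continuous.prodMap continuous_id))⟩
  have ht₀ := unitInterval.nonneg
  have ht₁ := unitInterval.le_one
  refine homotopic_of_paths_factor
    (((Path.segment (1 / 4 : ℝ) 0).trans (Path.segment 0 1)).trans (Path.segment 1 (1 / 2)))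
    (Path.segment (1 / 4 : ℝ) (1 / 2)) Φ (fun _ => rfl) (fun z t => ?_) (fun z t => ?_)
  · simp only [ContinuousMap.comp_apply, conj_snd, Φ, ContinuousMap.coe_mk, Path.trans_apply,
      Path.segment_apply, AffineMap.lineMap_apply_ring']
    split_ifs
    · rw [Path.extend_trans_of_le_half _ _ (by linarith [ht₀ t]),
        Path.extend_trans_of_le_half _ _ (by linarith [ht₀ t]), Path.extend_symm_apply,
        Path.extend_apply _ ⟨by linarith [ht₀ t], by linarith [ht₀ t]⟩]
      show H.symm (σ _, y₀) = H (_, y₀)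
      rw [ContinuousMap.Homotopy.symm_apply, unitInterval.symm_symm]
      exact congrArg (fun s => H (s, y₀)) (Subtype.ext (by ring))
    · rw [Path.extend_apply _ ⟨by linarith, by linarith⟩]
      exact congrArg (γ z) (Subtype.ext (by ring))
    · rw [Path.extend_trans_of_half_le _ _ (by linarith [ht₁ t]),
        Path.extend_apply _ ⟨by linarith [ht₁ t], by linarith⟩]
      show H.symm (_, f z.1.1) = H (_, f z.1.1)
      rw [ContinuousMap.Homotopy.symm_apply]
      exact congrArg (fun s => H (s, f z.1.1))
        (Subtype.ext (by simp only [unitInterval.coe_symm_eq]; ring))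
  · simp only [ContinuousMap.id_apply, Φ, ContinuousMap.coe_mk, Path.segment_apply,
      AffineMap.lineMap_apply_ring']
    rw [Path.extend_trans_of_le_half _ _ (by linarith [ht₁ t]),
      Path.extend_trans_of_half_le _ _ (by linarith [ht₀ t]),
      Path.extend_apply _ ⟨by linarith [ht₀ t], by linarith [ht₁ t]⟩]
    exact congrArg z.path (Subtype.ext (by ring))

theorem isHomotopyEquiv_conj (H : h₀.Homotopy h₁) :
    IsHomotopyEquiv (conj H : C(HoFib (h₀.comp f) (h₀ y₀), _)) :=
  ⟨conj H.symm, conj_symm_comp_conj_homotopic H,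
    by simpa using conj_symm_comp_conj_homotopic H.symm⟩

theorem isHomotopyEquiv_postcomp_of_homotopic_id {m : C(Y, Y)}
    (hm : (ContinuousMap.id Y).Homotopic m) :
    IsHomotopyEquiv (postcomp m : C(HoFib f y₀, _)) := by
  obtain ⟨H⟩ := hm
  -- `(conj H).comp (postcomp id)` is definitionally `conj H`.
  exact (isHomotopyEquiv_conj H).of_homotopic (conj_comp_postcomp_homotopic H)

theorem isHomotopyEquiv_postcomp {h : C(Y, Y')} (hh : IsHomotopyEquiv h) :
    IsHomotopyEquiv (postcomp h : C(HoFib f y₀, _)) := by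
  obtain ⟨g, hgh, hhg⟩ := hh
  exact IsHomotopyEquiv.of_comp_of_comp (B := postcomp g) (C := postcomp h)
    (isHomotopyEquiv_postcomp_of_homotopic_id hgh.symm)
    (isHomotopyEquiv_postcomp_of_homotopic_id hhg.symm)

end HoFib

/-- `KBb`, `KB`, `KbB`, `KC` stand for `KqB^b𝒩`, `KqB𝒩`, `KbB𝒩`, `KqC𝒩`; `ι`, `p` are the maps of
Waldhausen's fibration sequence, `botB` is Grayson's equivalence `⊥ : KbB𝒩 → KqC𝒩`, and
`botQ = botB ∘ p` is `⊥ : KqB𝒩 → KqC𝒩`, whose homotopy fibre is `K[qB𝒩 →⊥ qC𝒩]`. -/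
theorem KqBb_to_relative_equiv
    (KBb KB KbB KC : Type)
    [TopologicalSpace KBb] [TopologicalSpace KB] [TopologicalSpace KbB] [TopologicalSpace KC]
    (ι : C(KBb, KB)) (p : C(KB, KbB)) (botB : C(KbB, KC)) (botQ : C(KB, KC))
    (kb₀ : KbB) (c₀ : KC)
    (hnull : ∀ x, p (ι x) = kb₀)
    (hcompat : ∀ x, botB (p x) = botQ x)
    (hbase : botB kb₀ = c₀)
    (hWald : IsHoFiberSeq ι p kb₀ hnull)
    (hbotEquiv : IsHomotopyEquiv botB) :
    IsHomotopyEquiv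
      ((HoFib.map (ContinuousMap.id KB) botB
          (fun x => (hcompat x).trans (congrArg botQ rfl)) hbase).comp
        (toHoFib ι p kb₀ hnull)) := by
  subst hbase
  obtain rfl : botQ = botB.comp p := ContinuousMap.ext fun x => (hcompat x).symm
  exact hWald.comp (HoFib.isHomotopyEquiv_postcomp hbotEquiv)
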